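/- Define a coproduct Δ on the free vector space over planar binary rooted trees by: Δ(1) = 1⊗1, Δ(|) = 1⊗| + |⊗1, and Δ(t ∨ w) = Σ t₍₁₎ ⊗ (t₍₂₎ ∨ w) + Σ (t ∨ w₍₁₎) ⊗ w₍₂₎ − t ⊗ w. Then Δ is coassociative. -/

import Mathlib

/-!
Write `R_y` for `p₁ ⊗ p₂ ↦ p₁ ⊗ (p₂ ∨ y)` and `L_x` for `p₁ ⊗ p₂ ↦ (x ∨ p₁) ⊗ p₂`, the unit acting
as a unit for `∨`. The recursion `Δ(x ∨ y) = R_y Δx + L_x Δy − x ⊗ y` then holds for all `x, y`,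
the unit included. Coassociativity on `t ∨ w` follows by induction: `Δ ⊗ id` commutes with `R_w`
and `id ⊗ Δ` with `L_t`, while expanding `(Δ ⊗ id) L_t Δw` and `(id ⊗ Δ) R_w Δt` by the recursion
yields on both sides the mixed term `Σ t₍₁₎ ⊗ (t₍₂₎ ∨ w₍₁₎) ⊗ w₍₂₎`, summed in opposite orders,
and the correction terms `t ⊗ Δw` and `Δt ⊗ w` also occur on both sides.
-/

open Classical

/-- Planar binary rooted trees. `leaf` is the unique tree `|` with one leaf. -/
inductive PBT : Type
  | leaf : PBT
  | node : PBT → PBT → PBT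
  deriving DecidableEq

/-- Number of leaves of a planar binary rooted tree. -/
def leavesCount : PBT → ℕ
  | .leaf => 1
  | .node l r => leavesCount l + leavesCount r

/-- Graft the tree `w` onto the leftmost (first) leaf of `t`. -/
def graft1 : PBT → PBT → PBT
  | .leaf, w => w
  | .node l r, w => .node (graft1 l w) r

/-- The product `t ⋋ w := w ∘₁ (t ∨ |)`. -/
def lprod (t w : PBT) : PBT := graft1 w (.node t .leaf)

/-- A tree is `⋋`-irreducible if it is not a product of two (nonempty) trees. -/
def Irr (t : PBT) : Prop := ¬ ∃ u w : PBT, t = lprod u w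

/-- `∨` extended to trees-with-unit, the unit (`none`) acting as a unit. -/
def ovee : Option PBT → Option PBT → Option PBT
  | none, b => b
  | a, none => a
  | some t, some w => some (PBT.node t w)

/-- The coproduct on trees (with values in the free module on pairs of
trees-with-unit): `Δ(t ∨ w) = Σ t₍₁₎ ⊗ (t₍₂₎ ∨ w) + Σ (t ∨ w₍₁₎) ⊗ w₍₂₎ − t ⊗ w`. -/
noncomputable def D0 : PBT → ((Option PBT × Option PBT) →₀ ℤ)
  | .leaf =>
      Finsupp.single (none, some PBT.leaf) 1 + Finsupp.single (some PBT.leaf, none) 1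
  | .node t w =>
      ((D0 t).sum fun p a => a • Finsupp.single (p.1, ovee p.2 (some w)) 1) +
      ((D0 w).sum fun p a => a • Finsupp.single (ovee (some t) p.1, p.2) 1) -
      Finsupp.single (some t, some w) 1

/-- The coproduct `Δ` on the vector space spanned by trees and the unit:
`Δ(1) = 1 ⊗ 1` and on trees it is given by `D0`. -/
noncomputable def D : Option PBT → ((Option PBT × Option PBT) →₀ ℤ)
  | none => Finsupp.single (none, none) 1
  | some t => D0 t

/-- `(Δ ⊗ id) ∘ Δ`, on basis elements. -/
noncomputable def DL (f : (Option PBT × Option PBT) →₀ ℤ) :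
    (Option PBT × Option PBT × Option PBT) →₀ ℤ :=
  f.sum fun p a => a • ((D p.1).sum fun q b => b • Finsupp.single (q.1, q.2, p.2) 1)

/-- `(id ⊗ Δ) ∘ Δ`, on basis elements. -/
noncomputable def DR (f : (Option PBT × Option PBT) →₀ ℤ) :
    (Option PBT × Option PBT × Option PBT) →₀ ℤ :=
  f.sum fun p a => a • ((D p.2).sum fun q b => b • Finsupp.single (p.1, q.1, q.2) 1)

open Finsupp

section Comul

variable {R α β γ δ ε : Type*} [CommSemiring R]

/-- `c ⊗ id` and `id ⊗ c`, with `(α →₀ R) ⊗ (δ →₀ R)` realised as `α × δ →₀ R`. -/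
noncomputable def comulFst (c : α → (β × γ →₀ R)) : (α × δ →₀ R) →ₗ[R] (β × γ × δ →₀ R) :=
  linearCombination R fun p => mapDomain (fun q => (q.1, q.2, p.2)) (c p.1)

noncomputable def comulSnd (c : α → (β × γ →₀ R)) : (δ × α →₀ R) →ₗ[R] (δ × β × γ →₀ R) :=
  linearCombination R fun p => mapDomain (fun q => (p.1, q.1, q.2)) (c p.2)

theorem comulFst_single (c : α → (β × γ →₀ R)) (a : α) (d : δ) (r : R) :
    comulFst c (single (a, d) r) = r • mapDomain (fun q => (q.1, q.2, d)) (c a) :=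
  linearCombination_single ..

theorem comulSnd_single (c : α → (β × γ →₀ R)) (d : δ) (a : α) (r : R) :
    comulSnd c (single (d, a) r) = r • mapDomain (fun q => (d, q.1, q.2)) (c a) :=
  linearCombination_single ..

theorem comulFst_mapDomain_snd (c : α → (β × γ →₀ R)) (g : δ → ε) (f : α × δ →₀ R) :
    comulFst c (mapDomain (fun p => (p.1, g p.2)) f) =
      mapDomain (fun q => (q.1, q.2.1, g q.2.2)) (comulFst c f) := by
  induction f using induction_linear with
  | zero => simp
  | add f₁ f₂ h₁ h₂ => simp only [mapDomain_add, map_add, h₁, h₂]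
  | single p r =>
    rw [mapDomain_single, comulFst_single, comulFst_single, mapDomain_smul, ← mapDomain_comp]
    rfl

theorem comulSnd_mapDomain_fst (c : α → (β × γ →₀ R)) (g : δ → ε) (f : δ × α →₀ R) :
    comulSnd c (mapDomain (fun p => (g p.1, p.2)) f) =
      mapDomain (fun q => (g q.1, q.2.1, q.2.2)) (comulSnd c f) := by
  induction f using induction_linear with
  | zero => simp
  | add f₁ f₂ h₁ h₂ => simp only [mapDomain_add, map_add, h₁, h₂]
  | single p r =>
    rw [mapDomain_single, comulSnd_single, comulSnd_single, mapDomain_smul, ← mapDomain_comp]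
    rfl

theorem comulFst_mapDomain_comm_comulSnd (k : γ → α → ε) (X : β × γ →₀ R)
    (W : α × δ →₀ R) :
    comulFst (fun a => mapDomain (fun q => (q.1, k q.2 a)) X) W =
      comulSnd (fun b => mapDomain (fun q => (k b q.1, q.2)) W) X := by
  simp only [comulFst, comulSnd, linearCombination_apply, ← mapDomain_comp]
  simp only [mapDomain, smul_sum, smul_single]
  rw [Finsupp.sum_comm]
  exact sum_congr fun q _ => sum_congr fun p _ => by rw [smul_eq_mul, smul_eq_mul, mul_comm]; rfl

end Comul

theorem ovee_none_left (a : Option PBT) : ovee none a = a := by cases a <;> rfl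

theorem ovee_none_right (a : Option PBT) : ovee a none = a := by cases a <;> rfl

theorem D_none : D none = single (none, none) 1 := rfl

theorem D_some (t : PBT) : D (some t) = D0 t := rfl

theorem D0_node (t w : PBT) :
    D0 (.node t w) =
      mapDomain (fun p => (p.1, ovee p.2 (some w))) (D0 t) +
      mapDomain (fun p => (ovee (some t) p.1, p.2)) (D0 w) - single (some t, some w) 1 := by
  simp only [D0, mapDomain, smul_single_one]

theorem D_ovee (x y : Option PBT) :
    D (ovee x y) =
      mapDomain (fun p => (p.1, ovee p.2 y)) (D x) +
      mapDomain (fun p => (ovee x p.1, p.2)) (D y) - single (x, y) 1 := by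
  cases x with
  | none =>
    simp only [ovee_none_left, D_none, mapDomain_single, Prod.mk.eta, add_sub_cancel_left]
    exact mapDomain_id.symm
  | some t =>
    cases y with
    | none =>
      simp only [ovee_none_right, D_some, Prod.mk.eta, D_none, mapDomain_single,
        add_sub_cancel_right]
      exact mapDomain_id.symm
    | some w => exact D0_node t w

theorem DL_eq_comulFst (f : (Option PBT × Option PBT) →₀ ℤ) : DL f = comulFst D f := by
  simp only [DL, comulFst, linearCombination_apply, mapDomain, smul_single_one]

theorem DR_eq_comulSnd (f : (Option PBT × Option PBT) →₀ ℤ) : DR f = comulSnd D f := by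
  simp only [DR, comulSnd, linearCombination_apply, mapDomain, smul_single_one]

theorem comulFst_D_mapDomain_ovee_fst (x : Option PBT) (f : (Option PBT × Option PBT) →₀ ℤ) :
    comulFst D (mapDomain (fun p => (ovee x p.1, p.2)) f) =
      comulFst (fun y => mapDomain (fun p => (p.1, ovee p.2 y)) (D x)) f +
      mapDomain (fun q => (ovee x q.1, q.2)) (comulFst D f) -
      mapDomain (fun p => (x, p.1, p.2)) f := by
  induction f using induction_linear with
  | zero => simp
  | add f₁ f₂ h₁ h₂ => simp only [mapDomain_add, map_add, h₁, h₂]; abel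
  | single p r =>
    obtain ⟨y, d⟩ := p
    simp only [mapDomain_single, comulFst_single, D_ovee, mapDomain_add, mapDomain_sub,
      mapDomain_smul, smul_add, smul_sub, ← mapDomain_comp, smul_single_one]
    rfl

theorem comulSnd_D_mapDomain_ovee_snd (y : Option PBT) (f : (Option PBT × Option PBT) →₀ ℤ) :
    comulSnd D (mapDomain (fun p => (p.1, ovee p.2 y)) f) =
      mapDomain (fun q => (q.1, q.2.1, ovee q.2.2 y)) (comulSnd D f) +
      comulSnd (fun x => mapDomain (fun p => (ovee x p.1, p.2)) (D y)) f -
      mapDomain (fun p => (p.1, p.2, y)) f := by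
  induction f using induction_linear with
  | zero => simp
  | add f₁ f₂ h₁ h₂ => simp only [mapDomain_add, map_add, h₁, h₂]; abel
  | single p r =>
    obtain ⟨d, x⟩ := p
    simp only [mapDomain_single, comulSnd_single, D_ovee, mapDomain_add, mapDomain_sub,
      mapDomain_smul, smul_add, smul_sub, ← mapDomain_comp, smul_single_one]
    rfl

theorem coassoc_D0 (t : PBT) : comulFst D (D0 t) = comulSnd D (D0 t) := by
  induction t with
  | leaf =>
    simp only [D0, map_add, comulFst_single, comulSnd_single, D_none, D_some, mapDomain_add,
      mapDomain_single, one_smul]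
    abel
  | node t w iht ihw =>
    simp only [D0_node, map_add, map_sub, comulFst_mapDomain_snd D (ovee · (some w)),
      comulSnd_mapDomain_fst D (ovee (some t)),
      comulFst_D_mapDomain_ovee_fst, comulSnd_D_mapDomain_ovee_snd, comulFst_single,
      comulSnd_single, one_smul, D_some, comulFst_mapDomain_comm_comulSnd, iht, ihw]
    abel

/-- The coproduct `Δ` is coassociative. -/
theorem stmt14 (x : Option PBT) : DL (D x) = DR (D x) := by
  rw [DL_eq_comulFst, DR_eq_comulSnd]
  cases x with
  | none =>
    simp only [D_none, comulFst_single, mapDomain_single, one_smul, comulSnd_single, Prod.mk.eta]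
  | some t => exact coassoc_D0 t
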